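/- arXiv:2604.01785 — 3 statements merged into one kernel-verified Lean document; each statement's English description precedes it below -/
import Mathlib

section
/- Let g ∈ C¹(ℝ₊) and let t, ε > 0. Then there exists a constant C_ε > 0 (depending only on ε) such that |∫₀^∞ g(x)² e^{-x²/(2t)} dx − √(πt/2)·g(0)²| ≤ ε√t·g(0)² + C_ε·t·∫₀^∞ g'(x)² e^{-x²/(2t)} dx. -/
/-!
Write `w x = exp (-x ^ 2 / (2 * t))`, so that `∫₀^∞ w = √(π t / 2)`. The heart of the matter is the
Hardy-type inequality `∫₀^∞ (g - g 0)² w ≤ t ∫₀^∞ g'² w`: by Cauchy–Schwarz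
`(g x - g 0)² ≤ x ∫₀^x g'²`, and after exchanging the order of integration the inner integral is
`∫_y^∞ x w x dx = t w y`. The theorem then follows by integrating the pointwise bound
`|a² - b²| ≤ (1 + δ⁻¹) (a - b)² + δ b²` against `w`, with `δ = ε √(2 / π)`.
-/

open MeasureTheory Real Set Filter
open scoped ENNReal

theorem abs_sq_sub_sq_le (a b : ℝ) {δ : ℝ} (hδ : 0 < δ) :
    |a ^ 2 - b ^ 2| ≤ (1 + δ⁻¹) * (a - b) ^ 2 + δ * b ^ 2 := by
  have hamgm : 2 * |b * (a - b)| ≤ δ⁻¹ * (a - b) ^ 2 + δ * b ^ 2 := by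
    have hsq : 0 ≤ δ⁻¹ * (|a - b| - δ * |b|) ^ 2 := by positivity
    have hδδ : δ⁻¹ * δ = 1 := inv_mul_cancel₀ hδ.ne'
    rw [abs_mul, ← sq_abs (a - b), ← sq_abs b]
    nlinarith
  calc |a ^ 2 - b ^ 2| = |(a - b) ^ 2 + 2 * (b * (a - b))| := by ring_nf
    _ ≤ (a - b) ^ 2 + 2 * |b * (a - b)| := by
      refine (abs_add_le _ _).trans ?_
      rw [abs_of_nonneg (sq_nonneg _), abs_mul, abs_two]
    _ ≤ _ := by linarith

theorem sq_intervalIntegral_le_mul {f : ℝ → ℝ} {a b : ℝ} (hab : a ≤ b)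
    (hf : IntervalIntegrable f volume a b)
    (hf2 : IntervalIntegrable (fun x => f x ^ 2) volume a b) :
    (∫ x in a..b, f x) ^ 2 ≤ (b - a) * ∫ x in a..b, f x ^ 2 := by
  rcases hab.eq_or_lt with rfl | hlt
  · simp
  have jensen := (even_two.convexOn_pow (𝕜 := ℝ)).map_set_average_le
    (continuous_pow 2).continuousOn isClosed_univ (μ := volume) (t := Ioc a b)
    (by simp [hlt]) (by simp) (ae_of_all _ fun _ => mem_univ _)
    ((intervalIntegrable_iff_integrableOn_Ioc_of_le hab).1 hf)
    ((intervalIntegrable_iff_integrableOn_Ioc_of_le hab).1 hf2)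
  simp only [setAverage_eq, Real.volume_real_Ioc_of_le hab, smul_eq_mul] at jensen
  rw [intervalIntegral.integral_of_le hab, intervalIntegral.integral_of_le hab]
  have hba : 0 < b - a := sub_pos.2 hlt
  rw [mul_pow, inv_pow, sq (b - a), mul_inv, mul_assoc, mul_le_mul_iff_right₀ (by positivity),
    inv_mul_le_iff₀ hba] at jensen
  exact jensen

theorem sq_sub_le_mul_integral_deriv_sq {g : ℝ → ℝ} (hg : ContDiff ℝ 1 g) {a b : ℝ}
    (hab : a ≤ b) : (g b - g a) ^ 2 ≤ (b - a) * ∫ x in a..b, deriv g x ^ 2 := by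
  have hg' : Continuous (deriv g) := hg.continuous_deriv le_rfl
  rw [← intervalIntegral.integral_deriv_eq_sub
    (fun x _ => (hg.differentiable one_ne_zero).differentiableAt) (hg'.intervalIntegrable _ _)]
  exact sq_intervalIntegral_le_mul hab (hg'.intervalIntegrable _ _)
    ((hg'.pow 2).intervalIntegrable _ _)

theorem integrable_exp_neg_sq_div {t : ℝ} (ht : 0 < t) :
    Integrable fun x : ℝ => exp (-x ^ 2 / (2 * t)) := by
  simpa [neg_div, div_eq_inv_mul, mul_comm] using
    integrable_exp_neg_mul_sq (inv_pos.2 (mul_pos two_pos ht))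

theorem integrable_mul_exp_neg_sq_div {t : ℝ} (ht : 0 < t) :
    Integrable fun x : ℝ => x * exp (-x ^ 2 / (2 * t)) := by
  simpa [neg_div, div_eq_inv_mul, mul_comm] using
    integrable_mul_exp_neg_mul_sq (inv_pos.2 (mul_pos two_pos ht))

theorem integral_Ioi_exp_neg_sq_div {t : ℝ} (ht : 0 < t) :
    ∫ x in Ioi (0:ℝ), exp (-x ^ 2 / (2 * t)) = √(π * t / 2) := by
  have h := integral_gaussian_Ioi (2 * t)⁻¹
  simp only [neg_mul, ← div_eq_inv_mul, ← neg_div] at h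
  rw [h, show π / (2 * t)⁻¹ = 2 ^ 2 * (π * t / 2) by field_simp, sqrt_mul (by positivity),
    sqrt_sq zero_le_two]
  ring

theorem integral_Ioi_mul_exp_neg_sq_div {t : ℝ} (ht : 0 < t) (y : ℝ) :
    ∫ x in Ioi y, x * exp (-x ^ 2 / (2 * t)) = t * exp (-y ^ 2 / (2 * t)) := by
  have hderiv : ∀ x ∈ Ici y, HasDerivAt (fun x : ℝ => -(t * exp (-x ^ 2 / (2 * t))))
      (x * exp (-x ^ 2 / (2 * t))) x := by
    intro x _
    have hquad : HasDerivAt (fun x : ℝ => -x ^ 2 / (2 * t)) (-(2 * x) / (2 * t)) x := by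
      simpa using (hasDerivAt_pow 2 x).neg.div_const (2 * t)
    exact (hquad.exp.const_mul t).neg.congr_deriv (by field_simp)
  have hlim : Tendsto (fun x : ℝ => -(t * exp (-x ^ 2 / (2 * t)))) atTop (nhds 0) := by
    have hexponent : Tendsto (fun x : ℝ => -x ^ 2 / (2 * t)) atTop atBot :=
      (tendsto_neg_atBot_iff.2 (tendsto_pow_atTop two_ne_zero)).atBot_div_const (by positivity)
    simpa using ((tendsto_exp_atBot.comp hexponent).const_mul t).neg
  rw [integral_Ioi_of_hasDerivAt_of_tendsto' hderiv
    (integrable_mul_exp_neg_sq_div ht).integrableOn hlim]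
  ring

theorem lintegral_Ici_mul_exp_neg_sq_div {t y : ℝ} (ht : 0 < t) (hy : 0 ≤ y) :
    ∫⁻ x in Ici y, ENNReal.ofReal (x * exp (-x ^ 2 / (2 * t))) =
      ENNReal.ofReal (t * exp (-y ^ 2 / (2 * t))) := by
  rw [← integral_Ioi_mul_exp_neg_sq_div ht y, ← integral_Ici_eq_integral_Ioi,
    ofReal_integral_eq_lintegral_ofReal (integrable_mul_exp_neg_sq_div ht).integrableOn]
  filter_upwards [ae_restrict_mem measurableSet_Ici] with x hx
  exact mul_nonneg (hy.trans hx) (exp_pos _).le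

theorem lintegral_Ioi_mul_lintegral_Ioc {F G : ℝ → ℝ≥0∞} (hF : Measurable F) (hG : Measurable G)
    (a : ℝ) :
    ∫⁻ x in Ioi a, F x * ∫⁻ y in Ioc a x, G y = ∫⁻ y in Ioi a, G y * ∫⁻ x in Ici y, F x := by
  let H : ℝ → ℝ → ℝ≥0∞ := fun x y => if y ≤ x then F x * G y else 0
  have hH : Measurable (Function.uncurry H) :=
    Measurable.ite (measurableSet_le measurable_snd measurable_fst)
      ((hF.comp measurable_fst).mul (hG.comp measurable_snd)) measurable_const
  have hinner_y : ∀ x ∈ Ioi a, F x * ∫⁻ y in Ioc a x, G y = ∫⁻ y in Ioi a, H x y := by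
    intro x _
    have : (H x ·) = (Iic x).indicator (F x * G ·) := by
      ext y; simp [H, indicator_apply]
    rw [this, lintegral_indicator measurableSet_Iic, Measure.restrict_restrict measurableSet_Iic,
      Iic_inter_Ioi, lintegral_const_mul _ hG]
  have hinner_x : ∀ y ∈ Ioi a, G y * ∫⁻ x in Ici y, F x = ∫⁻ x in Ioi a, H x y := by
    intro y hy
    have : (H · y) = (Ici y).indicator (F · * G y) := by
      ext x; simp [H, indicator_apply]
    rw [this, lintegral_indicator measurableSet_Ici, Measure.restrict_restrict measurableSet_Ici,
      inter_eq_self_of_subset_left (Ici_subset_Ioi.2 hy), lintegral_mul_const _ hF, mul_comm]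
  rw [setLIntegral_congr_fun measurableSet_Ioi hinner_y,
    setLIntegral_congr_fun measurableSet_Ioi hinner_x, lintegral_lintegral_swap hH.aemeasurable]

theorem lintegral_sq_sub_mul_exp_neg_sq_div_le {g : ℝ → ℝ} (hg : ContDiff ℝ 1 g) {t : ℝ}
    (ht : 0 < t) :
    ∫⁻ x in Ioi 0, ENNReal.ofReal ((g x - g 0) ^ 2 * exp (-x ^ 2 / (2 * t))) ≤
      ENNReal.ofReal t *
        ∫⁻ x in Ioi 0, ENNReal.ofReal (deriv g x ^ 2 * exp (-x ^ 2 / (2 * t))) := by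
  have hg'_sq : Continuous fun y => deriv g y ^ 2 := (hg.continuous_deriv le_rfl).pow 2
  calc ∫⁻ x in Ioi 0, ENNReal.ofReal ((g x - g 0) ^ 2 * exp (-x ^ 2 / (2 * t)))
      ≤ ∫⁻ x in Ioi 0, ENNReal.ofReal (x * exp (-x ^ 2 / (2 * t))) *
          ∫⁻ y in Ioc 0 x, ENNReal.ofReal (deriv g y ^ 2) := by
        refine setLIntegral_mono' measurableSet_Ioi fun x (hx : 0 < x) => ?_
        rw [← ofReal_integral_eq_lintegral_ofReal hg'_sq.integrableOn_Ioc
            (ae_of_all _ fun _ => sq_nonneg _), ← ENNReal.ofReal_mul (by positivity),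
          ← intervalIntegral.integral_of_le hx.le]
        refine ENNReal.ofReal_le_ofReal ?_
        have hx_sq := sq_sub_le_mul_integral_deriv_sq hg hx.le
        rw [sub_zero] at hx_sq
        exact (mul_le_mul_of_nonneg_right hx_sq (exp_pos _).le).trans_eq (by ring)
    _ = ∫⁻ y in Ioi 0, ENNReal.ofReal (deriv g y ^ 2) *
          ENNReal.ofReal (t * exp (-y ^ 2 / (2 * t))) := by
        rw [lintegral_Ioi_mul_lintegral_Ioc (by fun_prop) (by fun_prop)]
        exact setLIntegral_congr_fun measurableSet_Ioi fun y (hy : 0 < y) => by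
          rw [lintegral_Ici_mul_exp_neg_sq_div ht hy.le]
    _ = _ := by
        rw [← lintegral_const_mul' _ _ ENNReal.ofReal_ne_top]
        refine lintegral_congr fun y => ?_
        rw [← ENNReal.ofReal_mul (sq_nonneg _), ← ENNReal.ofReal_mul ht.le]
        ring_nf

theorem integrableOn_sq_sub_mul_exp_neg_sq_div {g : ℝ → ℝ} (hg : ContDiff ℝ 1 g) {t : ℝ}
    (ht : 0 < t)
    (hd : IntegrableOn (fun x => deriv g x ^ 2 * exp (-x ^ 2 / (2 * t))) (Ioi 0)) :
    IntegrableOn (fun x => (g x - g 0) ^ 2 * exp (-x ^ 2 / (2 * t))) (Ioi 0) := by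
  have hgc := hg.continuous
  refine ⟨by fun_prop, ?_⟩
  rw [hasFiniteIntegral_iff_ofReal (ae_of_all _ fun x => by positivity)]
  refine (lintegral_sq_sub_mul_exp_neg_sq_div_le hg ht).trans_lt
    (ENNReal.mul_lt_top ENNReal.ofReal_lt_top ?_)
  rw [← ofReal_integral_eq_lintegral_ofReal hd (ae_of_all _ fun x => by positivity)]
  exact ENNReal.ofReal_lt_top

theorem setIntegral_sq_sub_mul_exp_neg_sq_div_le {g : ℝ → ℝ} (hg : ContDiff ℝ 1 g) {t : ℝ}
    (ht : 0 < t)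
    (hd : IntegrableOn (fun x => deriv g x ^ 2 * exp (-x ^ 2 / (2 * t))) (Ioi 0)) :
    ∫ x in Ioi 0, (g x - g 0) ^ 2 * exp (-x ^ 2 / (2 * t)) ≤
      t * ∫ x in Ioi 0, deriv g x ^ 2 * exp (-x ^ 2 / (2 * t)) := by
  have h := lintegral_sq_sub_mul_exp_neg_sq_div_le hg ht
  rw [← ofReal_integral_eq_lintegral_ofReal (integrableOn_sq_sub_mul_exp_neg_sq_div hg ht hd)
      (ae_of_all _ fun x => by positivity),
    ← ofReal_integral_eq_lintegral_ofReal hd (ae_of_all _ fun x => by positivity),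
    ← ENNReal.ofReal_mul ht.le, ENNReal.ofReal_le_ofReal_iff
      (mul_nonneg ht.le (setIntegral_nonneg measurableSet_Ioi fun x _ => by positivity))] at h
  exact h

theorem abs_integral_sq_mul_sub_le {α : Type*} [MeasurableSpace α] {μ : Measure α}
    {f w : α → ℝ} {b δ : ℝ} (hδ : 0 < δ) (hw : 0 ≤ w) (hwi : Integrable w μ)
    (hf : Integrable (fun x => f x ^ 2 * w x) μ)
    (hfb : Integrable (fun x => (f x - b) ^ 2 * w x) μ) :
    |∫ x, f x ^ 2 * w x ∂μ - b ^ 2 * ∫ x, w x ∂μ| ≤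
      (1 + δ⁻¹) * ∫ x, (f x - b) ^ 2 * w x ∂μ + δ * b ^ 2 * ∫ x, w x ∂μ := by
  rw [← integral_const_mul, ← integral_sub hf (hwi.const_mul _), ← integral_const_mul,
    ← integral_const_mul, ← integral_add (hfb.const_mul _) (hwi.const_mul _)]
  refine abs_integral_le_integral_abs.trans <| integral_mono (hf.sub (hwi.const_mul _)).abs
    ((hfb.const_mul _).add (hwi.const_mul _)) fun x => ?_
  calc |f x ^ 2 * w x - b ^ 2 * w x| = |f x ^ 2 - b ^ 2| * w x := by
        rw [← sub_mul, abs_mul, abs_of_nonneg (hw x)]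
    _ ≤ ((1 + δ⁻¹) * (f x - b) ^ 2 + δ * b ^ 2) * w x :=
        mul_le_mul_of_nonneg_right (abs_sq_sub_sq_le _ _ hδ) (hw x)
    _ = _ := by ring

/-- one-dimensional Gaussian boundary-trace estimate (Lemma `magic`). -/
theorem stmt0 :
    ∀ ε > (0:ℝ), ∃ C > (0:ℝ), ∀ g : ℝ → ℝ, ContDiff ℝ 1 g → ∀ t > (0:ℝ),
      IntegrableOn (fun x => g x ^ 2 * Real.exp (-x ^ 2 / (2 * t))) (Ioi 0) volume →
      IntegrableOn (fun x => (deriv g x) ^ 2 * Real.exp (-x ^ 2 / (2 * t))) (Ioi 0) volume →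
      |(∫ x in Ioi (0:ℝ), g x ^ 2 * Real.exp (-x ^ 2 / (2 * t))) -
          Real.sqrt (π * t / 2) * g 0 ^ 2| ≤
        ε * Real.sqrt t * g 0 ^ 2 +
          C * t * ∫ x in Ioi (0:ℝ), (deriv g x) ^ 2 * Real.exp (-x ^ 2 / (2 * t)) := by
  intro ε hε
  set δ := ε * √(2 / π)
  have hδ : 0 < δ := by positivity
  refine ⟨1 + δ⁻¹, by positivity, fun g hg t ht hg2 hd2 => ?_⟩
  have hδ_sqrt : δ * √(π * t / 2) = ε * √t := by
    rw [mul_assoc, ← sqrt_mul (by positivity)]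
    congr 2
    field_simp
  have key := abs_integral_sq_mul_sub_le (b := g 0) hδ (fun x => (exp_pos _).le)
    (integrable_exp_neg_sq_div ht).integrableOn hg2
    (integrableOn_sq_sub_mul_exp_neg_sq_div hg ht hd2)
  rw [integral_Ioi_exp_neg_sq_div ht, mul_comm (g 0 ^ 2)] at key
  have hpoincare := setIntegral_sq_sub_mul_exp_neg_sq_div_le hg ht hd2
  rw [← hδ_sqrt]
  linarith [mul_le_mul_of_nonneg_left hpoincare (by positivity : (0:ℝ) ≤ 1 + δ⁻¹)]
end

section
/- Let g : ℝ → ℝ be a bounded continuous function. Then ∫_ℝ g(x)·e^{−dist(x,[−π/2,π/2])²/(2t)} dx = ∫_{−π/2}^{π/2} g(x) dx + (g(π/2) + g(−π/2))·√(πt/2) + o(√t) as t → 0⁺. -/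
/-!
Outside `[a, b]` the weight `exp (-dist(x, [a, b])² / (2t))` is the Gaussian centred at the
nearest endpoint, and inside it is `1`. Splitting `ℝ = (-∞, a] ∪ (a, b] ∪ (b, ∞)` and
substituting `x = b + √t u`, resp. `x = a - √t u`, turns each outer piece into
`√t ∫₀^∞ g (endpoint ± √t u) e^{-u²/2} du`, and by dominated convergence these half-line
integrals tend to `g (endpoint) · √(π/2)`.
-/

open MeasureTheory Real Set Filter Topology Asymptotics

lemma Real.infDist_Icc_of_le_left {a b x : ℝ} (hab : a ≤ b) (hx : x ≤ a) :
    Metric.infDist x (Icc a b) = a - x := by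
  refine le_antisymm ?_ ((Metric.le_infDist (nonempty_Icc.2 hab)).2 fun y hy => ?_)
  · simpa [Real.dist_eq, abs_of_nonpos (sub_nonpos.2 hx)] using
      Metric.infDist_le_dist_of_mem (x := x) (left_mem_Icc.2 hab)
  · rw [Real.dist_eq, abs_sub_comm]
    linarith [le_abs_self (y - x), hy.1]

lemma Real.infDist_Icc_of_right_le {a b x : ℝ} (hab : a ≤ b) (hx : b ≤ x) :
    Metric.infDist x (Icc a b) = x - b := by
  refine le_antisymm ?_ ((Metric.le_infDist (nonempty_Icc.2 hab)).2 fun y hy => ?_)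
  · simpa [Real.dist_eq, abs_of_nonneg (sub_nonneg.2 hx)] using
      Metric.infDist_le_dist_of_mem (x := x) (right_mem_Icc.2 hab)
  · rw [Real.dist_eq]
    linarith [le_abs_self (x - y), hy.2]

noncomputable def gaussianTail (g : ℝ → ℝ) (c s : ℝ) : ℝ :=
  ∫ u in Ioi (0 : ℝ), g (c + s * u) * exp (-u ^ 2 / 2)

lemma integrable_mul_exp_neg_sq_sub_div {g : ℝ → ℝ} (hg : AEStronglyMeasurable g) {M : ℝ}
    (hM : ∀ x, |g x| ≤ M) (c : ℝ) {t : ℝ} (ht : 0 < t) :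
    Integrable fun x => g x * exp (-(x - c) ^ 2 / (2 * t)) := by
  have hgauss : Integrable fun x => exp (-(x - c) ^ 2 / (2 * t)) := by
    refine ((integrable_exp_neg_mul_sq (b := 1 / (2 * t)) (by positivity)).comp_sub_right c).congr
      (ae_of_all _ fun x => ?_)
    ring_nf
  exact hgauss.bdd_mul hg (c := M) (ae_of_all _ fun x => by simpa using hM x)

lemma setIntegral_Ioi_mul_exp_neg_sq_sub_div (g : ℝ → ℝ) (c : ℝ) {t : ℝ} (ht : 0 < t) :
    ∫ x in Ioi c, g x * exp (-(x - c) ^ 2 / (2 * t)) = √t * gaussianTail g c √t := by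
  have hst : 0 < √t := sqrt_pos.2 ht
  have hscale : gaussianTail g c √t
      = (√t)⁻¹ * ∫ s in Ioi (0 : ℝ), g (c + s) * exp (-s ^ 2 / (2 * t)) := by
    have h := integral_comp_mul_left_Ioi (fun s => g (c + s) * exp (-s ^ 2 / (2 * t))) 0 hst
    rw [mul_zero] at h
    rw [gaussianTail, ← smul_eq_mul, ← h]
    refine setIntegral_congr_fun measurableSet_Ioi fun u _ => ?_
    rw [mul_pow, sq_sqrt ht.le]
    field_simp
  have hshift : ∫ s in Ioi (0 : ℝ), g (c + s) * exp (-s ^ 2 / (2 * t))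
      = ∫ x in Ioi c, g x * exp (-(x - c) ^ 2 / (2 * t)) := by
    have h := (measurePreserving_add_right volume c).setIntegral_preimage_emb
      (Homeomorph.addRight c).measurableEmbedding
      (fun x => g x * exp (-(x - c) ^ 2 / (2 * t))) (Ioi c)
    rw [show (· + c) ⁻¹' Ioi c = Ioi 0 by ext x; simp] at h
    rw [← h]
    refine setIntegral_congr_fun measurableSet_Ioi fun s _ => ?_
    simp [add_comm]
  rw [hscale, hshift]
  field_simp

lemma setIntegral_Iic_mul_exp_neg_sq_sub_div (g : ℝ → ℝ) (c : ℝ) {t : ℝ} (ht : 0 < t) :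
    ∫ x in Iic c, g x * exp (-(x - c) ^ 2 / (2 * t)) = √t * gaussianTail g c (-√t) := by
  have hreflect := integral_comp_neg_Iic c fun y => g (-y) * exp (-(y - -c) ^ 2 / (2 * t))
  simp only [neg_neg] at hreflect
  rw [show (fun x => g x * exp (-(x - c) ^ 2 / (2 * t)))
      = fun x => g x * exp (-(-x - -c) ^ 2 / (2 * t)) by ext x; ring_nf,
    hreflect, setIntegral_Ioi_mul_exp_neg_sq_sub_div _ _ ht, gaussianTail, gaussianTail]
  congr 2 with u
  ring_nf

lemma tendsto_gaussianTail {g : ℝ → ℝ} (hg : Continuous g) {M : ℝ} (hM : ∀ x, |g x| ≤ M)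
    (c : ℝ) : Tendsto (gaussianTail g c) (𝓝 0) (𝓝 (g c * √(π / 2))) := by
  have hexp : ∀ u : ℝ, exp (-u ^ 2 / 2) = exp (-(1 / 2) * u ^ 2) := fun u => by ring_nf
  have hlim : ∫ u in Ioi (0 : ℝ), g c * exp (-u ^ 2 / 2) = g c * √(π / 2) := by
    simp_rw [integral_const_mul, hexp, integral_gaussian_Ioi]
    rw [show π / (1 / 2) = 2 ^ 2 * (π / 2) by ring, sqrt_mul (by positivity),
      sqrt_sq zero_le_two]
    ring
  rw [← hlim]
  refine tendsto_integral_filter_of_dominated_convergence (fun u => M * exp (-(1 / 2) * u ^ 2))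
    (Eventually.of_forall fun s => ?_) (Eventually.of_forall fun s => ?_)
    ((integrable_exp_neg_mul_sq (by norm_num)).const_mul M).integrableOn (ae_of_all _ fun u => ?_)
  · exact ((hg.comp (by fun_prop)).mul (by fun_prop)).aestronglyMeasurable
  · refine ae_of_all _ fun u => ?_
    rw [norm_mul, norm_of_nonneg (exp_pos _).le, hexp]
    exact mul_le_mul_of_nonneg_right ((norm_eq_abs _).trans_le (hM _)) (exp_pos _).le
  · refine ((hg.tendsto c).comp ?_).mul_const _
    simpa using (tendsto_id (x := 𝓝 (0 : ℝ))).mul_const u |>.const_add c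

lemma integral_mul_exp_neg_infDist_Icc_sq {g : ℝ → ℝ} (hg : Continuous g) {M : ℝ}
    (hM : ∀ x, |g x| ≤ M) {a b : ℝ} (hab : a ≤ b) {t : ℝ} (ht : 0 < t) :
    ∫ x, g x * exp (-Metric.infDist x (Icc a b) ^ 2 / (2 * t))
      = (∫ x in Icc a b, g x) + √t * (gaussianTail g b √t + gaussianTail g a (-√t)) := by
  set φ := fun x => g x * exp (-Metric.infDist x (Icc a b) ^ 2 / (2 * t))
  have hleft : EqOn φ (fun x => g x * exp (-(x - a) ^ 2 / (2 * t))) (Iic a) := fun x hx => by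
    simp only [φ, Real.infDist_Icc_of_le_left hab hx]
    ring_nf
  have hright : EqOn φ (fun x => g x * exp (-(x - b) ^ 2 / (2 * t))) (Ioi b) := fun x hx => by
    simp only [φ, Real.infDist_Icc_of_right_le hab (le_of_lt hx)]
  have hmid : EqOn φ g (Icc a b) := fun x hx => by
    simp [φ, Metric.infDist_zero_of_mem hx]
  have hIic : IntegrableOn φ (Iic a) :=
    (integrable_mul_exp_neg_sq_sub_div hg.aestronglyMeasurable hM a ht).integrableOn.congr_fun
      hleft.symm measurableSet_Iic
  have hIoi : IntegrableOn φ (Ioi b) :=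
    (integrable_mul_exp_neg_sq_sub_div hg.aestronglyMeasurable hM b ht).integrableOn.congr_fun
      hright.symm measurableSet_Ioi
  have hIoc : IntegrableOn φ (Ioc a b) :=
    (by fun_prop : Continuous φ).integrableOn_Icc.mono_set Ioc_subset_Icc_self
  have hsplit : ∫ x, φ x = (∫ x in Iic a, φ x) + ((∫ x in Ioc a b, φ x) + ∫ x in Ioi b, φ x) := by
    rw [← setIntegral_union Ioc_disjoint_Ioi_same measurableSet_Ioi hIoc hIoi,
      Ioc_union_Ioi_eq_Ioi hab,
      intervalIntegral.integral_Iic_add_Ioi hIic (Ioc_union_Ioi_eq_Ioi hab ▸ hIoc.union hIoi)]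
  rw [hsplit, setIntegral_congr_fun measurableSet_Iic hleft,
    setIntegral_congr_fun measurableSet_Ioi hright, integral_Icc_eq_integral_Ioc,
    setIntegral_congr_fun measurableSet_Ioc (hmid.mono Ioc_subset_Icc_self),
    setIntegral_Iic_mul_exp_neg_sq_sub_div _ _ ht, setIntegral_Ioi_mul_exp_neg_sq_sub_div _ _ ht]
  ring

theorem isLittleO_integral_mul_exp_neg_infDist_Icc_sq {g : ℝ → ℝ} (hg : Continuous g) {M : ℝ}
    (hM : ∀ x, |g x| ≤ M) {a b : ℝ} (hab : a ≤ b) :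
    (fun t : ℝ => (∫ x, g x * exp (-Metric.infDist x (Icc a b) ^ 2 / (2 * t))) -
        (∫ x in Icc a b, g x) - (g b + g a) * √(π * t / 2))
      =o[𝓝[>] 0] fun t => √t := by
  have hsqrt : Tendsto (fun t : ℝ => √t) (𝓝[>] 0) (𝓝 0) :=
    (continuous_sqrt.tendsto' 0 0 sqrt_zero).mono_left nhdsWithin_le_nhds
  have hremainder : Tendsto
      (fun t => gaussianTail g b √t + gaussianTail g a (-√t) - (g b + g a) * √(π / 2))
      (𝓝[>] 0) (𝓝 0) := by
    have := ((tendsto_gaussianTail hg hM b).comp hsqrt).add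
      ((tendsto_gaussianTail hg hM a).comp (by simpa using hsqrt.neg))
    simpa [add_mul] using this.sub_const ((g b + g a) * √(π / 2))
  refine (((isLittleO_one_iff ℝ).2 hremainder).mul_isBigO (isBigO_refl (fun t => √t) _)).congr'
    ?_ (by simp)
  filter_upwards [self_mem_nhdsWithin] with t (ht : 0 < t)
  rw [integral_mul_exp_neg_infDist_Icc_sq hg hM hab ht,
    show π * t / 2 = t * (π / 2) by ring, sqrt_mul ht.le]
  ring

/-- Laplace expansion
`∫ g e^{-dist(x,[-π/2,π/2])²/(2t)} dx
  = ∫_{-π/2}^{π/2} g + (g(π/2)+g(-π/2))√(πt/2) + o(√t)` as `t → 0⁺`. -/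
theorem stmt5 (g : ℝ → ℝ) (hg : Continuous g) (hb : ∃ M, ∀ x, |g x| ≤ M) :
    (fun t : ℝ =>
        (∫ x, g x *
            Real.exp (-(Metric.infDist x (Icc (-(π / 2)) (π / 2))) ^ 2 / (2 * t))) -
          (∫ x in Icc (-(π / 2)) (π / 2), g x) -
          (g (π / 2) + g (-(π / 2))) * Real.sqrt (π * t / 2))
      =o[𝓝[>] (0:ℝ)] fun t => Real.sqrt t := by
  obtain ⟨M, hM⟩ := hb
  exact isLittleO_integral_mul_exp_neg_infDist_Icc_sq hg hM (by linarith [pi_pos])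
end

section
/- Let V : ℝⁿ → ℝ be a differentiable function satisfying the Polyak–Łojasiewicz inequality V(x) − min V ≤ C_PL·‖∇V(x)‖² for all x, with C_PL > 0. Then for all x ∈ ℝⁿ, (1/(4·C_PL))·dist(x, argmin V)² ≤ V(x) − min V. -/
/-!
The function `f = √(V - m)` vanishes exactly on `argmin V`, and the PŁ inequality says that its
slope is at least `κ = 1 / (2 √C_PL)` wherever it is positive. For `0 < c < κ`, a global minimizer
`y` of `f + c · dist(·, x)` (it exists because the space is proper) satisfies
`f y + c · dist(y, x) ≤ f x` and `f y ≤ f z + c · dist(z, y)` for all `z` (Ekeland's variational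
principle), so the slope of `f` at `y` is at most `c < κ`, forcing `f y = 0`. Hence
`c · dist(x, argmin V) ≤ f x`; letting `c → κ` and squaring gives the claim.
-/

open Metric Set Filter Topology

theorem exists_add_mul_dist_le_and_forall_le_add_mul_dist {X : Type*} [MetricSpace X]
    [ProperSpace X] {f : X → ℝ} (hf : Continuous f) (hf0 : ∀ x, 0 ≤ f x) {c : ℝ} (hc : 0 < c)
    (x : X) : ∃ y, f y + c * dist y x ≤ f x ∧ ∀ z, f y ≤ f z + c * dist z y := by
  obtain ⟨y, hy⟩ : ∃ y, ∀ z, f y + c * dist y x ≤ f z + c * dist z x := by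
    refine Continuous.exists_forall_le' (f := fun z => f z + c * dist z x) (by fun_prop) x ?_
    have hcoercive : Tendsto (fun z => c * dist z x) (cocompact X) atTop :=
      (tendsto_dist_right_cocompact_atTop x).const_mul_atTop hc
    filter_upwards [hcoercive.eventually_ge_atTop (f x)] with z hz
    simp only [dist_self, mul_zero, add_zero]
    linarith [hf0 z]
  refine ⟨y, by simpa using hy x, fun z => ?_⟩
  linarith [hy z, mul_le_mul_of_nonneg_left (dist_triangle z y x) hc.le]

section Slope

variable {E : Type*} [NormedAddCommGroup E] [NormedSpace ℝ E] {f : E → ℝ} {f' : E →L[ℝ] ℝ}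
  {y : E} {c : ℝ}

theorem HasFDerivAt.neg_mul_norm_le_apply_of_forall_le_add_mul_norm (hf : HasFDerivAt f f' y)
    (h : ∀ᶠ z in 𝓝 y, f y ≤ f z + c * ‖z - y‖) (w : E) : -(c * ‖w‖) ≤ f' w := by
  set ψ : ℝ → ℝ := fun t => f (y + t • w) + t * (c * ‖w‖)
  have hψ : HasDerivAt ψ (f' w + c * ‖w‖) 0 := by
    have hline : HasDerivAt (fun t : ℝ => y + t • w) w 0 := by
      simpa using ((hasDerivAt_id (0 : ℝ)).smul_const w).const_add y
    have hf0 : HasFDerivAt f f' (y + (0 : ℝ) • w) := by simpa using hf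
    exact (hf0.comp_hasDerivAt 0 hline).add (hasDerivAt_mul_const (c * ‖w‖))
  have hmin : IsLocalMinOn ψ (Ici 0) 0 := by
    have hline : Tendsto (fun t : ℝ => y + t • w) (𝓝 0) (𝓝 y) :=
      (by fun_prop : Continuous fun t : ℝ => y + t • w).tendsto' 0 y (by simp)
    filter_upwards [nhdsWithin_le_nhds (hline.eventually h), self_mem_nhdsWithin]
      with t ht (ht0 : 0 ≤ t)
    simpa [ψ, norm_smul, abs_of_nonneg ht0, mul_comm, mul_left_comm] using ht
  have hone : (1 : ℝ) ∈ posTangentConeAt (Ici 0) 0 :=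
    mem_posTangentConeAt_of_segment_subset (by simp [segment_eq_Icc, Icc_subset_Ici_self])
  have := hmin.hasFDerivWithinAt_nonneg hψ.hasFDerivAt.hasFDerivWithinAt hone
  rw [ContinuousLinearMap.toSpanSingleton_apply_one] at this
  linarith

theorem HasFDerivAt.norm_le_of_forall_le_add_mul_norm (hf : HasFDerivAt f f' y) (hc : 0 ≤ c)
    (h : ∀ᶠ z in 𝓝 y, f y ≤ f z + c * ‖z - y‖) : ‖f'‖ ≤ c := by
  refine f'.opNorm_le_bound hc fun w => abs_le.2 ⟨?_, ?_⟩
  · exact hf.neg_mul_norm_le_apply_of_forall_le_add_mul_norm h w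
  · simpa using hf.neg_mul_norm_le_apply_of_forall_le_add_mul_norm h (-w)

end Slope

theorem mul_infDist_le_of_le_norm_fderiv {E : Type*} [NormedAddCommGroup E] [NormedSpace ℝ E]
    [ProperSpace E] {f : E → ℝ} (hf : Continuous f) (hf0 : ∀ x, 0 ≤ f x) {κ : ℝ} (hκ : 0 < κ)
    (hslope : ∀ y, 0 < f y → ∃ f' : E →L[ℝ] ℝ, HasFDerivAt f f' y ∧ κ ≤ ‖f'‖) (x : E) :
    κ * infDist x {y | f y = 0} ≤ f x := by
  have key : ∀ c ∈ Ioo 0 κ, c * infDist x {y | f y = 0} ≤ f x := by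
    rintro c ⟨hc0, hcκ⟩
    obtain ⟨y, hyx, hy⟩ := exists_add_mul_dist_le_and_forall_le_add_mul_dist hf hf0 hc0 x
    have hy0 : f y = 0 := by
      by_contra hne
      obtain ⟨f', hf', hκf'⟩ := hslope y ((hf0 y).lt_of_ne' hne)
      have := hf'.norm_le_of_forall_le_add_mul_norm hc0.le
        (Eventually.of_forall fun z => by simpa [dist_eq_norm] using hy z)
      linarith
    calc c * infDist x {y | f y = 0} ≤ c * dist y x := by
          rw [dist_comm]; exact mul_le_mul_of_nonneg_left (infDist_le_dist_of_mem hy0) hc0.le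
      _ ≤ f x := by linarith [hf0 y]
  refine le_of_tendsto (x := 𝓝[<] κ) ((tendsto_id.mul_const _).mono_left nhdsWithin_le_nhds) ?_
  filter_upwards [Ioo_mem_nhdsLT hκ] using key

theorem exists_hasFDerivAt_sqrt_sub_le_norm_of_le_mul_norm_gradient_sq {F : Type*}
    [NormedAddCommGroup F] [InnerProductSpace ℝ F] [CompleteSpace F] {V : F → ℝ} {m C : ℝ}
    {y : F} (hV : DifferentiableAt ℝ V y) (hC : 0 < C) (hy : m < V y)
    (hPL : V y - m ≤ C * ‖gradient V y‖ ^ 2) :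
    ∃ f' : F →L[ℝ] ℝ, HasFDerivAt (fun z => √(V z - m)) f' y ∧ 1 / (2 * √C) ≤ ‖f'‖ := by
  have hpos : 0 < V y - m := sub_pos.2 hy
  refine ⟨_, (hV.hasFDerivAt.sub_const m).sqrt hpos.ne', ?_⟩
  have hnorm : ‖fderiv ℝ V y‖ = ‖gradient V y‖ := by
    rw [← toDual_gradient, LinearIsometryEquiv.norm_map]
  have hsqrt : √(V y - m) ≤ √C * ‖gradient V y‖ := by
    rw [← Real.sqrt_sq (norm_nonneg (gradient V y)), ← Real.sqrt_mul hC.le]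
    exact Real.sqrt_le_sqrt hPL
  rw [norm_smul, hnorm, Real.norm_eq_abs, abs_of_pos (by positivity), div_mul_eq_mul_div,
    one_mul, div_le_div_iff₀ (by positivity) (by positivity)]
  nlinarith [Real.sqrt_pos.2 hpos]

theorem stmt6_general (n : ℕ) (V : EuclideanSpace ℝ (Fin n) → ℝ) (hd : Differentiable ℝ V)
    (m CPL : ℝ) (hCPL : 0 < CPL) (hm : ∀ x, m ≤ V x)
    (hPL : ∀ x, V x - m ≤ CPL * ‖gradient V x‖ ^ 2) :
    ∀ x, (1 / (4 * CPL)) * (Metric.infDist x {y | V y = m}) ^ 2 ≤ V x - m := by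
  intro x
  have hzero : {y | √(V y - m) = 0} = {y | V y = m} := by
    ext y
    simp only [mem_ofPred_eq, Real.sqrt_eq_zero', sub_nonpos]
    exact ⟨fun h => le_antisymm h (hm y), le_of_eq⟩
  have hbound := mul_infDist_le_of_le_norm_fderiv (f := fun z => √(V z - m))
    (hd.continuous.sub continuous_const).sqrt (fun _ => Real.sqrt_nonneg _)
    (by positivity : 0 < 1 / (2 * √CPL))
    (fun y hy => exists_hasFDerivAt_sqrt_sub_le_norm_of_le_mul_norm_gradient_sq (hd y) hCPL
      (sub_pos.1 (Real.sqrt_pos.1 hy)) (hPL y)) x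
  rw [hzero] at hbound
  calc 1 / (4 * CPL) * infDist x {y | V y = m} ^ 2
      = (1 / (2 * √CPL) * infDist x {y | V y = m}) ^ 2 := by
        rw [mul_pow, div_pow, mul_pow, Real.sq_sqrt hCPL.le]; norm_num
    _ ≤ √(V x - m) ^ 2 := by gcongr; exact mul_nonneg (by positivity) infDist_nonneg
    _ = V x - m := Real.sq_sqrt (sub_nonneg.2 (hm x))

/-- quadratic growth consequence of the Polyak–Łojasiewicz inequality. -/
theorem stmt6 (n : ℕ) (V : EuclideanSpace ℝ (Fin n) → ℝ) (hd : Differentiable ℝ V)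
    (m CPL : ℝ) (hCPL : 0 < CPL) (hm : ∀ x, m ≤ V x)
    (hne : {x | V x = m}.Nonempty)
    (hPL : ∀ x, V x - m ≤ CPL * ‖gradient V x‖ ^ 2) :
    ∀ x, (1 / (4 * CPL)) * (Metric.infDist x {y | V y = m}) ^ 2 ≤ V x - m :=
  stmt6_general n V hd m CPL hCPL hm hPL
end
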